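/- arXiv:2110.11456 — 4 statements merged into one kernel-verified Lean document; each statement's English description precedes it below -/
import Mathlib

section
/- Let V, Q be finite-dimensional real inner product spaces, a : V×V → ℝ a bilinear form that is coercive (a(v,v) ≥ C₀‖v‖² with C₀ > 0), b : Q×V → ℝ bilinear, J : Q×Q → ℝ a positive semidefinite symmetric bilinear form, γ ≥ 0. Then the linear system: find (u,p) with a(u,v) + b(p,v) = F(v) for all v and b(q,u) − (1/(1+γ))J(p,q) = 0 for all q, has at most one solution, provided the inf-sup type stability ‖q‖ ≤ C(sup_{v≠0} b(q,v)/‖v‖ + J(q,q)^{1/2}) holds for all q ∈ Q. -/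
/-- uniqueness of solutions of the stabilized saddle point system
under coercivity of a, positive semidefinite symmetric J, and the stabilized
inf-sup condition. -/
theorem stmt5
    {V Q : Type*}
    [NormedAddCommGroup V] [InnerProductSpace ℝ V] [FiniteDimensional ℝ V]
    [NormedAddCommGroup Q] [InnerProductSpace ℝ Q] [FiniteDimensional ℝ Q]
    (a : V →ₗ[ℝ] V →ₗ[ℝ] ℝ) (b : Q →ₗ[ℝ] V →ₗ[ℝ] ℝ) (J : Q →ₗ[ℝ] Q →ₗ[ℝ] ℝ)
    (C₀ : ℝ) (hC₀ : 0 < C₀)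
    (hcoer : ∀ v : V, C₀ * ‖v‖ ^ 2 ≤ a v v)
    (hJpos : ∀ q : Q, 0 ≤ J q q)
    (hJsymm : ∀ q q' : Q, J q q' = J q' q)
    (γ : ℝ) (hγ : 0 ≤ γ)
    (C : ℝ) (hC : 0 < C)
    (hinfsup : ∀ q : Q,
      ‖q‖ ≤ C * ((⨆ v : {v : V // v ≠ 0}, b q v / ‖(v : V)‖) + Real.sqrt (J q q)))
    (F : V →ₗ[ℝ] ℝ)
    (u₁ u₂ : V) (p₁ p₂ : Q)
    (h₁a : ∀ v : V, a u₁ v + b p₁ v = F v)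
    (h₁b : ∀ q : Q, b q u₁ - (1 / (1 + γ)) * J p₁ q = 0)
    (h₂a : ∀ v : V, a u₂ v + b p₂ v = F v)
    (h₂b : ∀ q : Q, b q u₂ - (1 / (1 + γ)) * J p₂ q = 0) :
    u₁ = u₂ ∧ p₁ = p₂ := by
  set u := u₁ - u₂ with hu
  set p := p₁ - p₂ with hp
  have hA : ∀ v : V, a u v + b p v = 0 := by
    intro v
    have h1 := h₁a v; have h2 := h₂a v
    simp only [hu, hp, map_sub, LinearMap.sub_apply]
    linarith
  have hpos : 0 < 1 / (1 + γ) := by positivity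
  have hB : ∀ q : Q, b q u = (1 / (1 + γ)) * J p q := by
    intro q
    have h1 := h₁b q; have h2 := h₂b q
    simp only [hu, hp, map_sub, LinearMap.sub_apply] at *
    linarith
  have key : a u u = -((1 / (1 + γ)) * J p p) := by
    have := hA u
    rw [hB p] at this
    linarith
  have hnormu : ‖u‖ ^ 2 ≤ 0 ∧ J p p ≤ 0 := by
    have h1 := hcoer u
    have h2 := hJpos p
    have h3 : 0 ≤ ‖u‖ ^ 2 := sq_nonneg _
    constructor <;> nlinarith
  have hu0 : u = 0 := by
    have : ‖u‖ = 0 := by nlinarith [hnormu.1, norm_nonneg u]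
    exact norm_eq_zero.mp this
  have hJ0 : J p p = 0 := le_antisymm hnormu.2 (hJpos p)
  have hbp : ∀ v : V, b p v = 0 := by
    intro v
    have := hA v
    rw [hu0] at this
    simpa using this
  have hsup : (⨆ v : {v : V // v ≠ 0}, b p v / ‖(v : V)‖) = 0 := by
    by_cases h : Nonempty {v : V // v ≠ 0}
    · have : ∀ v : {v : V // v ≠ 0}, b p v / ‖(v : V)‖ = (0 : ℝ) := by
        intro v; rw [hbp]; simp
      simp only [this]
      exact ciSup_const
    · rw [not_nonempty_iff] at h
      exact Real.iSup_of_isEmpty _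
  have hp0 : p = 0 := by
    have h := hinfsup p
    rw [hsup, hJ0, Real.sqrt_zero] at h
    simpa using h
  exact ⟨sub_eq_zero.mp hu0, sub_eq_zero.mp hp0⟩
end

section
/- Let p, q be polynomials of degree ≤ k−1 on two simplices K₁, K₂ in ℝ^d sharing a common face F, and suppose all jumps of normal derivatives of order 0 ≤ ℓ ≤ k−1 vanish across F: [∂_n^ℓ q]|_F = 0 for all ℓ. Then q extends to a single polynomial on K₁ ∪ K₂, i.e., q|_{K₁} and q|_{K₂} are restrictions of the same polynomial of degree ≤ k−1. -/
open MvPolynomial Polynomial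

variable {d : ℕ}

/-- Directional derivative operator on multivariate polynomials. -/
noncomputable def Dv (v : Fin d → ℝ) (q : MvPolynomial (Fin d) ℝ) : MvPolynomial (Fin d) ℝ :=
  ∑ i, v i • MvPolynomial.pderiv i q

lemma Dv_C (v : Fin d → ℝ) (a : ℝ) : Dv v (MvPolynomial.C a) = 0 := by
  simp [Dv, MvPolynomial.pderiv_C]

lemma Dv_add (v : Fin d → ℝ) (p q : MvPolynomial (Fin d) ℝ) :
    Dv v (p + q) = Dv v p + Dv v q := by
  simp [Dv, map_add, smul_add, Finset.sum_add_distrib]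

lemma Dv_sub (v : Fin d → ℝ) (p q : MvPolynomial (Fin d) ℝ) :
    Dv v (p - q) = Dv v p - Dv v q := by
  simp [Dv, map_sub, smul_sub, Finset.sum_sub_distrib]

lemma Dv_iterate_sub (v : Fin d → ℝ) (ℓ : ℕ) (p q : MvPolynomial (Fin d) ℝ) :
    (Dv v)^[ℓ] (p - q) = (Dv v)^[ℓ] p - (Dv v)^[ℓ] q := by
  induction ℓ generalizing p q with
  | zero => simp
  | succ ℓ ih => simp [Function.iterate_succ_apply, Dv_sub, ih]

lemma Dv_mul_X (v : Fin d → ℝ) (p : MvPolynomial (Fin d) ℝ) (i : Fin d) :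
    Dv v (p * MvPolynomial.X i) = Dv v p * MvPolynomial.X i + v i • p := by
  classical
  simp only [Dv, MvPolynomial.pderiv_mul, MvPolynomial.pderiv_X, smul_add,
    Finset.sum_add_distrib, Finset.sum_mul, smul_mul_assoc]
  congr 1
  have : ∀ j : Fin d,
      v j • (p * Pi.single (M := fun _ => MvPolynomial (Fin d) ℝ) j 1 i)
      = if i = j then v j • p else 0 := by
    intro j
    rw [Pi.single_apply]
    by_cases h : i = j
    · rw [if_pos h, if_pos h, mul_one]
    · rw [if_neg h, if_neg h, mul_zero, smul_zero]
  rw [Finset.sum_congr rfl (fun j _ => this j),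
    Finset.sum_ite_eq Finset.univ i (fun j => v j • p)]
  simp

noncomputable def evalDerivCLM (q : MvPolynomial (Fin d) ℝ) (x : Fin d → ℝ) :
    (Fin d → ℝ) →L[ℝ] ℝ :=
  ∑ i, MvPolynomial.eval x (MvPolynomial.pderiv i q) • ContinuousLinearMap.proj i

lemma evalDerivCLM_apply (q : MvPolynomial (Fin d) ℝ) (x v : Fin d → ℝ) :
    evalDerivCLM q x v = MvPolynomial.eval x (Dv v q) := by
  simp [evalDerivCLM, Dv, ContinuousLinearMap.sum_apply, MvPolynomial.smul_eval, mul_comm]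

lemma hasFDerivAt_eval (q : MvPolynomial (Fin d) ℝ) (x : Fin d → ℝ) :
    HasFDerivAt (fun y => MvPolynomial.eval y q) (evalDerivCLM q x) x := by
  induction q using MvPolynomial.induction_on with
  | C a =>
    have h0 : evalDerivCLM (MvPolynomial.C a : MvPolynomial (Fin d) ℝ) x = 0 := by
      ext v; simp [evalDerivCLM, MvPolynomial.pderiv_C]
    simp only [MvPolynomial.eval_C, h0]
    exact hasFDerivAt_const _ _
  | add p r hp hr =>
    have h0 : evalDerivCLM (p + r) x = evalDerivCLM p x + evalDerivCLM r x := by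
      ext v
      simp [evalDerivCLM_apply, Dv_add]
    simp only [map_add, h0]
    exact hp.add hr
  | mul_X p i hp =>
    have hX : HasFDerivAt (fun y : Fin d → ℝ => y i)
        (ContinuousLinearMap.proj i : (Fin d → ℝ) →L[ℝ] ℝ) x :=
      hasFDerivAt_apply i x
    have h := hp.mul hX
    have h0 : evalDerivCLM (p * MvPolynomial.X i) x
        = MvPolynomial.eval x p • (ContinuousLinearMap.proj i : (Fin d → ℝ) →L[ℝ] ℝ)
          + x i • evalDerivCLM p x := by
      ext v
      classical
      simp only [evalDerivCLM_apply, ContinuousLinearMap.add_apply,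
        ContinuousLinearMap.smul_apply, ContinuousLinearMap.proj_apply, Dv_mul_X,
        map_add, MvPolynomial.eval_mul, MvPolynomial.eval_X, MvPolynomial.smul_eval,
        smul_eq_mul]
      ring
    simp only [map_mul, MvPolynomial.eval_X, h0]
    exact h

lemma contDiff_eval (q : MvPolynomial (Fin d) ℝ) :
    ContDiff ℝ ⊤ (fun y : Fin d → ℝ => MvPolynomial.eval y q) := by
  induction q using MvPolynomial.induction_on with
  | C a => simp only [MvPolynomial.eval_C]; exact contDiff_const
  | add p r hp hr => simp only [map_add]; exact hp.add hr
  | mul_X p i hp =>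
    simp only [map_mul, MvPolynomial.eval_X]
    exact hp.mul ((ContinuousLinearMap.proj i : (Fin d → ℝ) →L[ℝ] ℝ).contDiff)

lemma iterated_eval (v : Fin d → ℝ) (ℓ : ℕ) (q : MvPolynomial (Fin d) ℝ) (x : Fin d → ℝ) :
    iteratedFDeriv ℝ ℓ (fun y => MvPolynomial.eval y q) x (fun _ => v)
      = MvPolynomial.eval x ((Dv v)^[ℓ] q) := by
  induction ℓ generalizing q with
  | zero => simp
  | succ ℓ ih =>
    rw [iteratedFDeriv_succ_apply_right]
    have hinit : Fin.init (fun _ : Fin (ℓ + 1) => v) = fun _ : Fin ℓ => v := rfl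
    rw [hinit]
    have hfd : (fun y => fderiv ℝ (fun z => MvPolynomial.eval z q) y)
        = fun y => evalDerivCLM q y := funext fun y => (hasFDerivAt_eval q y).fderiv
    have hcd : ContDiff ℝ ⊤ (fderiv ℝ (fun z => MvPolynomial.eval z q)) :=
      (contDiff_eval q).fderiv_right le_top
    have hcomp := (ContinuousLinearMap.apply ℝ ℝ v).iteratedFDeriv_comp_left (hcd.contDiffAt (x := x))
      (le_top : (ℓ : WithTop ℕ∞) ≤ ⊤)
    have happ : iteratedFDeriv ℝ ℓ (fderiv ℝ (fun z => MvPolynomial.eval z q)) x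
          (fun _ => v) ((fun _ : Fin (ℓ+1) => v) (Fin.last ℓ))
        = iteratedFDeriv ℝ ℓ
            ((ContinuousLinearMap.apply ℝ ℝ v) ∘ fderiv ℝ (fun z => MvPolynomial.eval z q)) x
            (fun _ => v) := by
      rw [hcomp]; rfl
    rw [happ]
    have hfun : (ContinuousLinearMap.apply ℝ ℝ v) ∘ fderiv ℝ (fun z => MvPolynomial.eval z q)
        = fun y => MvPolynomial.eval y (Dv v q) := by
      funext y
      simp only [Function.comp_apply, ContinuousLinearMap.apply_apply, hfd]
      exact evalDerivCLM_apply q y v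
    rw [hfun, ih (Dv v q), ← Function.iterate_succ_apply]

lemma derivative_aeval_line (v : Fin d → ℝ) (φ : Fin d → Polynomial ℝ)
    (hφ : ∀ i, Polynomial.derivative (φ i) = Polynomial.C (v i))
    (q : MvPolynomial (Fin d) ℝ) :
    Polynomial.derivative (MvPolynomial.aeval φ q)
      = MvPolynomial.aeval φ (Dv v q) := by
  induction q using MvPolynomial.induction_on with
  | C a => simp [Dv_C, MvPolynomial.aeval_C]
  | add p r hp hr => simp [map_add, Dv_add, hp, hr]
  | mul_X p i hp =>
    rw [map_mul, MvPolynomial.aeval_X, Polynomial.derivative_mul, hp, hφ i,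
      Dv_mul_X, map_add, map_mul, MvPolynomial.aeval_X, map_smul]
    congr 1
    rw [Polynomial.smul_eq_C_mul, mul_comm]

lemma iterate_derivative_aeval_line (v : Fin d → ℝ) (φ : Fin d → Polynomial ℝ)
    (hφ : ∀ i, Polynomial.derivative (φ i) = Polynomial.C (v i))
    (ℓ : ℕ) (q : MvPolynomial (Fin d) ℝ) :
    Polynomial.derivative^[ℓ] (MvPolynomial.aeval φ q)
      = MvPolynomial.aeval φ ((Dv v)^[ℓ] q) := by
  induction ℓ generalizing q with
  | zero => simp
  | succ ℓ ih =>
    rw [Function.iterate_succ_apply, Function.iterate_succ_apply,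
      derivative_aeval_line v φ hφ, ih]

lemma natDegree_aeval_line (φ : Fin d → Polynomial ℝ)
    (hφ : ∀ i, (φ i).natDegree ≤ 1) (q : MvPolynomial (Fin d) ℝ) :
    (MvPolynomial.aeval φ q).natDegree ≤ q.totalDegree := by
  rw [MvPolynomial.aeval_def, MvPolynomial.eval₂_eq]
  apply Polynomial.natDegree_sum_le_of_forall_le
  intro s hs
  calc (algebraMap ℝ ℝ[X] (MvPolynomial.coeff s q) * ∏ i ∈ s.support, φ i ^ s i).natDegree
      ≤ (∏ i ∈ s.support, φ i ^ s i).natDegree := by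
        rw [Polynomial.algebraMap_eq]
        exact Polynomial.natDegree_C_mul_le _ _
    _ ≤ ∑ i ∈ s.support, (φ i ^ s i).natDegree := Polynomial.natDegree_prod_le _ _
    _ ≤ ∑ i ∈ s.support, s i := by
        refine Finset.sum_le_sum fun i _ => ?_
        calc (φ i ^ s i).natDegree ≤ s i * (φ i).natDegree := Polynomial.natDegree_pow_le
          _ ≤ s i * 1 := Nat.mul_le_mul_left _ (hφ i)
          _ = s i := Nat.mul_one _
    _ ≤ q.totalDegree := MvPolynomial.le_totalDegree hs

lemma eval_aeval_line (φ : Fin d → Polynomial ℝ) (t : ℝ) (q : MvPolynomial (Fin d) ℝ) :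
    Polynomial.eval t (MvPolynomial.aeval φ q)
      = MvPolynomial.eval (fun i => Polynomial.eval t (φ i)) q :=
  AlgHom.congr_fun (MvPolynomial.comp_aeval φ (Polynomial.aeval t : ℝ[X] →ₐ[ℝ] ℝ)) q

/-- if two polynomials of degree ≤ k-1 on the two sides of a
common face F (contained in a hyperplane, with nonempty relative interior in
it) have all jumps of normal derivatives of orders 0,…,k-1 vanishing on F,
then they are the same polynomial. -/
theorem stmt7 (d k : ℕ) (hk : 1 ≤ k)
    (p₁ p₂ : MvPolynomial (Fin d) ℝ)
    (hdeg₁ : p₁.totalDegree ≤ k - 1) (hdeg₂ : p₂.totalDegree ≤ k - 1)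
    (n : Fin d → ℝ) (hn : n ≠ 0) (c : ℝ)
    (H : Set (Fin d → ℝ)) (hH : H = {x | (∑ i, n i * x i) = c})
    (F : Set (Fin d → ℝ)) (hFH : F ⊆ H)
    -- F has nonempty relative interior in the hyperplane H
    (hFint : ∃ U : Set (Fin d → ℝ), IsOpen U ∧ (U ∩ H).Nonempty ∧ U ∩ H ⊆ F)
    (hjump : ∀ ℓ : ℕ, ℓ ≤ k - 1 → ∀ x ∈ F,
      iteratedFDeriv ℝ ℓ (fun y => MvPolynomial.eval y p₁) x (fun _ => n) =
      iteratedFDeriv ℝ ℓ (fun y => MvPolynomial.eval y p₂) x (fun _ => n)) :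
    p₁ = p₂ := by
  obtain ⟨U, hUopen, hUH, hUF⟩ := hFint
  obtain ⟨x₀, hx₀⟩ := hUH
  rw [← sub_eq_zero]
  set q : MvPolynomial (Fin d) ℝ := p₁ - p₂ with hqdef
  have hdegq : q.totalDegree ≤ k - 1 := by
    rw [hqdef, sub_eq_add_neg]
    refine le_trans (MvPolynomial.totalDegree_add _ _) ?_
    rw [MvPolynomial.totalDegree_neg]
    exact max_le hdeg₁ hdeg₂
  -- vanishing of all directional derivatives of order ≤ k-1 on F
  have hD : ∀ ℓ, ℓ ≤ k - 1 → ∀ x ∈ F, MvPolynomial.eval x ((Dv n)^[ℓ] q) = 0 := by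
    intro ℓ hℓ x hx
    rw [hqdef, Dv_iterate_sub, map_sub, ← iterated_eval, ← iterated_eval,
      hjump ℓ hℓ x hx, sub_self]
  -- q vanishes on all lines through U ∩ H in direction n
  have hline : ∀ x ∈ U ∩ H, ∀ t : ℝ,
      MvPolynomial.eval (fun i => x i + n i * t) q = 0 := by
    intro x hx t
    set φ : Fin d → ℝ[X] := fun i => Polynomial.C (x i) + Polynomial.C (n i) * Polynomial.X
      with hφdef
    have hder : ∀ i, Polynomial.derivative (φ i) = Polynomial.C (n i) := by
      intro i; simp [hφdef]
    have hnd : ∀ i, (φ i).natDegree ≤ 1 := by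
      intro i
      refine le_trans (Polynomial.natDegree_add_le _ _) (max_le ?_ ?_)
      · simp [hφdef]
      · exact le_trans (Polynomial.natDegree_C_mul_le _ _) (le_of_eq Polynomial.natDegree_X)
    have hPdeg : (MvPolynomial.aeval φ q).natDegree ≤ k - 1 :=
      le_trans (natDegree_aeval_line φ hnd q) hdegq
    have hcoeff : ∀ ℓ, (MvPolynomial.aeval φ q).coeff ℓ = 0 := by
      intro ℓ
      by_cases hℓ : ℓ ≤ k - 1
      · have h1 := Polynomial.coeff_iterate_derivative (MvPolynomial.aeval φ q) 0 (k := ℓ)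
        rw [iterate_derivative_aeval_line n φ hder, Polynomial.coeff_zero_eq_eval_zero,
          eval_aeval_line] at h1
        have hx' : (fun i => Polynomial.eval 0 (φ i)) = x := by
          funext i; simp [hφdef]
        rw [hx', hD ℓ hℓ x (hUF hx)] at h1
        have h2 := h1.symm
        rw [zero_add, Nat.descFactorial_self, nsmul_eq_mul] at h2
        have h3 : (ℓ.factorial : ℝ) ≠ 0 := Nat.cast_ne_zero.mpr ℓ.factorial_ne_zero
        exact (mul_eq_zero.mp h2).resolve_left h3
      · exact Polynomial.coeff_eq_zero_of_natDegree_lt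
          (lt_of_le_of_lt hPdeg (by omega))
    have hP0 : MvPolynomial.aeval φ q = 0 := Polynomial.ext fun ℓ => by
      rw [hcoeff]; simp
    have h4 := eval_aeval_line φ t q
    rw [hP0] at h4
    simp only [Polynomial.eval_zero] at h4
    have hφt : (fun i => Polynomial.eval t (φ i)) = fun i => x i + n i * t := by
      funext i; simp [hφdef]
    rw [hφt] at h4
    exact h4.symm
  -- q vanishes on an open neighborhood of x₀
  have hnn : (0 : ℝ) < ∑ i, n i * n i := by
    obtain ⟨i, hi⟩ := Function.ne_iff.mp hn
    refine Finset.sum_pos' (fun j _ => mul_self_nonneg _) ⟨i, Finset.mem_univ i, ?_⟩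
    exact mul_self_pos.mpr hi
  set nn : ℝ := ∑ i, n i * n i with hnndef
  set tf : (Fin d → ℝ) → ℝ := fun y => ((∑ i, n i * y i) - c) / nn with htfdef
  set π : (Fin d → ℝ) → (Fin d → ℝ) := fun y i => y i - tf y * n i with hπdef
  have htfcont : Continuous tf := by
    refine Continuous.div_const (Continuous.sub ?_ continuous_const) _
    exact continuous_finset_sum _ fun i _ => continuous_const.mul (continuous_apply i)
  have hπcont : Continuous π := by
    refine continuous_pi fun i => (continuous_apply i).sub ?_
    exact htfcont.mul continuous_const
  have hx₀H : (∑ i, n i * x₀ i) = c := by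
    have := hx₀.2; rw [hH] at this; exact this
  have hπx₀ : π x₀ = x₀ := by
    funext i
    simp [hπdef, htfdef, hx₀H]
  set V : Set (Fin d → ℝ) := π ⁻¹' U with hVdef
  have hVopen : IsOpen V := hUopen.preimage hπcont
  have hx₀V : x₀ ∈ V := by
    rw [hVdef, Set.mem_preimage, hπx₀]
    exact hx₀.1
  have hzero : ∀ y ∈ V, MvPolynomial.eval y q = 0 := by
    intro y hy
    have hπyH : π y ∈ H := by
      rw [hH]
      show (∑ i, n i * (y i - tf y * n i)) = c
      have : ∀ i ∈ Finset.univ, n i * (y i - tf y * n i)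
          = n i * y i - tf y * (n i * n i) := by intro i _; ring
      rw [Finset.sum_congr rfl this, Finset.sum_sub_distrib, ← Finset.mul_sum, ← hnndef]
      rw [htfdef]
      field_simp
      ring
    have hπyU : π y ∈ U := hy
    have := hline (π y) ⟨hπyU, hπyH⟩ (tf y)
    have hrw : (fun i => π y i + n i * tf y) = y := by
      funext i
      simp only [hπdef]
      ring
    rwa [hrw] at this
  -- analytic continuation: q vanishes everywhere
  have han : AnalyticOnNhd ℝ (fun y => MvPolynomial.eval y q) Set.univ :=
    AnalyticOnNhd.eval_mvPolynomial q
  have hev : (fun y => MvPolynomial.eval y q) =ᶠ[nhds x₀] 0 := by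
    filter_upwards [hVopen.mem_nhds hx₀V] with y hy using hzero y hy
  have hall := han.eqOn_zero_of_preconnected_of_eventuallyEq_zero
    isPreconnected_univ (Set.mem_univ x₀) hev
  have : ∀ y, MvPolynomial.eval y q = 0 := fun y => hall (Set.mem_univ y)
  exact MvPolynomial.funext fun y => by rw [this y, map_zero]
end

section
/- Let I_h be a quasi-interpolant with ‖∇(v − I_h v)‖_{L²(T)} + h_T^{-1}‖v − I_h v‖_{L²(T)} ≤ C h_T^k |v|_{H^{k+1}(ω_T)}, and let Π₀ satisfy the H¹ stability ‖∇Π₀ w‖_{L²(T)} ≤ C(‖∇w‖_{L²(T)} + h_T^{-1}‖w‖_{L²(T)}). If u is divergence-free and Π_h = I_h + Π₀(1−I_h) maps u into the divergence-free discrete subspace Z_h, then inf_{w_h∈Z_h} ‖∇(u − w_h)‖_{L²(T)} ≤ C h_T^k |u|_{H^{k+1}(ω_T)}. -/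
/-- Theorem A.3: combining the quasi-interpolation estimate for
I_h, the H¹-stability of Π₀, and membership Π_h u ∈ Z_h gives the local optimal
approximation in the discrete divergence-free subspace:
inf_{w∈Z_h} ‖∇(u−w)‖_{L²(T)} ≤ C(1+C) h_T^k |u|_{H^{k+1}(ω_T)}. -/
theorem stmt16
    {V : Type*} [AddCommGroup V]
    (Zh : Set V)                   -- discrete divergence-free subspace
    (G L : V → ℝ)                  -- ‖∇·‖_{L²(T)} and ‖·‖_{L²(T)} seminorms
    (hGnonneg : ∀ x, 0 ≤ G x) (hLnonneg : ∀ x, 0 ≤ L x)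
    (hGsub : ∀ x y : V, G (x - y) ≤ G x + G y)
    (Ih Pi0 : V → V)
    (C hT s : ℝ) (hC : 0 < C) (hhT : 0 < hT) (hs : 0 ≤ s)
    (k : ℕ)
    (u : V)
    -- Scott–Zhang type approximation estimate (s = |u|_{H^{k+1}(ω_T)}):
    (happrox : G (u - Ih u) + hT⁻¹ * L (u - Ih u) ≤ C * hT ^ k * s)
    -- H¹ stability of Π₀:
    (hstab : ∀ w : V, G (Pi0 w) ≤ C * (G w + hT⁻¹ * L w))
    -- Π_h u = I_h u + Π₀(u − I_h u) lands in Z_h: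
    (hZh : Ih u + Pi0 (u - Ih u) ∈ Zh) :
    ∃ wh ∈ Zh, G (u - wh) ≤ ((1 + C) * C) * hT ^ k * s := by
  refine ⟨Ih u + Pi0 (u - Ih u), hZh, ?_⟩
  have h1 : u - (Ih u + Pi0 (u - Ih u)) = (u - Ih u) - Pi0 (u - Ih u) := by abel
  rw [h1]
  have h2 := hGsub (u - Ih u) (Pi0 (u - Ih u))
  have h3 := hstab (u - Ih u)
  have h4 := hLnonneg (u - Ih u)
  have h5 : (0:ℝ) < hT⁻¹ := inv_pos.mpr hhT
  nlinarith [mul_nonneg h5.le h4]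
end

section
/- Suppose for each q in a finite-dimensional pressure space there exists v supported in the interior with b(v,q) ≥ c‖q‖² − C J(q,q)^{1/2}‖q‖ and ‖v‖ ≤ ‖q‖. Then for the solution (u_h, p_h) of the stabilized saddle point system with data f, using boundedness of a and the energy bound for u_h and J(p_h,p_h), one obtains ‖p_h‖ ≤ C(1+γ)^{1/2}‖f‖_{V'_h}, with C independent of γ, h. -/
set_option maxHeartbeats 1000000 in
/-- pressure stability. From the stabilized inf-sup condition
(with interior-supported test functions), continuity of a_h, the norm relation
‖v‖_{V_h} ≤ (1+γ)^{1/2}‖v‖_{V₀,h}, and the energy estimate, the discrete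
pressure satisfies ‖p_h‖ ≤ Cp (1+γ)^{1/2}‖f‖ with Cp independent of γ and h. -/
theorem stmt17 (c C Ca C₀ : ℝ) (hc : 0 < c) (hC : 0 < C) (hCa : 0 < Ca) (hC₀ : 0 < C₀) :
    ∃ Cp > 0, ∀ (V Q : Type) (γ : ℝ), 0 ≤ γ →
      ∀ (nV nV0 : V → ℝ)        -- ‖·‖_{V_h} and ‖·‖_{V₀,h} norms
        (nQ : Q → ℝ)            -- pressure norm ‖·‖_{L²(Ω)}
        (a : V → V → ℝ) (b : V → Q → ℝ) (J : Q → ℝ)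
        (f : V → ℝ) (Fn : ℝ)    -- data and its dual norm
        (uh : V) (ph : Q),
        (∀ q, 0 ≤ nQ q) → (∀ v, 0 ≤ nV v) → (∀ v, 0 ≤ nV0 v) →
        (∀ q, 0 ≤ J q) → 0 ≤ Fn →
        -- norm relation ‖v‖_{V_h} ≤ (1+γ)^{1/2}‖v‖_{V₀,h}:
        (∀ v, nV v ≤ Real.sqrt (1 + γ) * nV0 v) →
        -- continuity of a_h:
        (∀ v w, |a v w| ≤ Ca * nV v * nV w) →
        -- bound on the data functional:
        (∀ v, |f v| ≤ Fn * nV v) →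
        -- stabilized inf-sup: interior-supported v with b(v,p_h) large:
        (∃ v : V, nV0 v ≤ nQ ph ∧
          c * (nQ ph) ^ 2 ≤ b v ph + Real.sqrt (J ph) * nQ ph ∧
          -- the momentum equation tested with this v:
          a uh v + b v ph = f v) →
        -- energy estimate:
        ((C₀ / 2) * (nV uh) ^ 2 + (1 + γ)⁻¹ * J ph ≤ (1 / (2 * C₀)) * Fn ^ 2) →
        nQ ph ≤ Cp * Real.sqrt (1 + γ) * Fn := by
  have key : ∀ x y : ℝ, 0 ≤ x → 0 ≤ y → x ^ 2 ≤ y ^ 2 → x ≤ y := by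
    intro x y hx hy h; nlinarith
  set s : ℝ := Real.sqrt (2 * C₀) with hs
  have hs0 : 0 < s := Real.sqrt_pos.mpr (by linarith)
  have hs2 : s ^ 2 = 2 * C₀ := Real.sq_sqrt (by linarith)
  refine ⟨(1 + Ca / C₀ + 1 / s) / c, by positivity, ?_⟩
  intro V Q γ hγ nV nV0 nQ a b J f Fn uh ph hnQ hnV hnV0 hJ hFn hrel hcont hf hinf hen
  obtain ⟨v, hv1, hv2, hv3⟩ := hinf
  set G : ℝ := Real.sqrt (1 + γ) with hG
  have hG0 : 0 < G := Real.sqrt_pos.mpr (by linarith)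
  have hG2 : G ^ 2 = 1 + γ := Real.sq_sqrt (by linarith)
  have hG1 : 1 ≤ G := by nlinarith
  set P := nQ ph with hP
  have hP0 : 0 ≤ P := hnQ ph
  have hJph : 0 ≤ (1 + γ)⁻¹ * J ph := mul_nonneg (inv_nonneg.mpr (by linarith)) (hJ ph)
  have hinv : (1 + γ) * (1 + γ)⁻¹ = 1 := by
    field_simp
  have hinvC : (2 * C₀) * (1 / (2 * C₀)) = 1 := by field_simp
  -- bound on nV uh
  have hen1 : C₀ / 2 * nV uh ^ 2 ≤ 1 / (2 * C₀) * Fn ^ 2 := by linarith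
  have hu2 : (nV uh) ^ 2 ≤ (Fn / C₀) ^ 2 := by
    have h := mul_le_mul_of_nonneg_left hen1 (by linarith : (0:ℝ) ≤ 2 * C₀)
    have he : (2 * C₀) * (1 / (2 * C₀) * Fn ^ 2) = Fn ^ 2 := by field_simp
    rw [he] at h
    have he2 : (Fn / C₀) ^ 2 = Fn ^ 2 / C₀ ^ 2 := by ring
    rw [he2, le_div_iff₀ (by positivity)]
    nlinarith
  have hu : nV uh ≤ Fn / C₀ := key _ _ (hnV uh) (by positivity) hu2
  -- bound on sqrt (J ph)
  have hJb : J ph ≤ (1 + γ) * Fn ^ 2 / (2 * C₀) := by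
    have h1 : (1 + γ)⁻¹ * J ph ≤ 1 / (2 * C₀) * Fn ^ 2 := by nlinarith [hnV uh]
    have h2 := mul_le_mul_of_nonneg_left h1 (by linarith : (0:ℝ) ≤ 1 + γ)
    calc J ph = (1 + γ) * (1 + γ)⁻¹ * J ph := by rw [hinv]; ring
      _ = (1 + γ) * ((1 + γ)⁻¹ * J ph) := by ring
      _ ≤ (1 + γ) * (1 / (2 * C₀) * Fn ^ 2) := h2
      _ = (1 + γ) * Fn ^ 2 / (2 * C₀) := by ring
  have hsJ : Real.sqrt (J ph) ≤ G * Fn / s := by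
    refine key _ _ (Real.sqrt_nonneg _) (by positivity) ?_
    rw [Real.sq_sqrt (hJ ph)]
    have : (G * Fn / s) ^ 2 = (1 + γ) * Fn ^ 2 / (2 * C₀) := by
      rw [div_pow, hs2, mul_pow, hG2]
    rw [this]; exact hJb
  -- bound on nV v
  have hvP : nV v ≤ G * P := le_trans (hrel v) (by nlinarith [hnV0 v])
  -- main chain
  have hmain : c * P ^ 2 ≤ (Fn + Ca * nV uh) * nV v + Real.sqrt (J ph) * P := by
    have hb : b v ph = f v - a uh v := by linarith [hv3]
    have h1 := abs_le.mp (hf v)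
    have h2 := abs_le.mp (hcont uh v)
    nlinarith [hv2]
  have hvnn : 0 ≤ nV v := hnV v
  have e1 : (Fn + Ca * nV uh) * nV v ≤ (Fn + Ca * (Fn / C₀)) * (G * P) := by
    refine mul_le_mul (by nlinarith) hvP hvnn ?_
    have : 0 ≤ Ca * (Fn / C₀) := mul_nonneg hCa.le (div_nonneg hFn hC₀.le)
    linarith
  have e2 : Real.sqrt (J ph) * P ≤ (G * Fn / s) * P :=
    mul_le_mul_of_nonneg_right hsJ hP0
  have hcc : c * ((1 + Ca / C₀ + 1 / s) / c) = 1 + Ca / C₀ + 1 / s := by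
    field_simp
  have hfinal : c * P ^ 2 ≤ c * ((1 + Ca / C₀ + 1 / s) / c) * G * Fn * P := by
    have he : c * ((1 + Ca / C₀ + 1 / s) / c) * G * Fn * P
        = (Fn + Ca * (Fn / C₀)) * (G * P) + (G * Fn / s) * P := by
      rw [hcc]; ring
    rw [he]
    linarith
  rcases eq_or_lt_of_le hP0 with hP0' | hP0'
  · rw [← hP0']; positivity
  · nlinarith [mul_pos hc hP0', hfinal]
end
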